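/- arXiv:2203.16673 — 2 statements merged into one kernel-verified Lean document; each statement's English description precedes it below -/
import Mathlib

section
/- Let V₁ ∈ ℝ^{n×R} and V₂ ∈ ℝ^{m×R} have orthonormal columns and let Δ ∈ ℝ^{n×m}. If ‖P_W(Δ)‖_* ≤ 3‖P_V(Δ)‖_*, then ‖Δ‖_F ≤ 5√R · ‖Δ‖. -/
open MeasureTheory ProbabilityTheory Matrix

noncomputable section

def eNorm {ι : Type*} [Fintype ι] (x : ι → ℝ) : ℝ := Real.sqrt (∑ i, x i ^ 2)

def eInner {ι : Type*} [Fintype ι] (x y : ι → ℝ) : ℝ := ∑ i, x i * y i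

def frobNorm {m n : Type*} [Fintype m] [Fintype n] (A : Matrix m n ℝ) : ℝ :=
  Real.sqrt (∑ i, ∑ j, A i j ^ 2)

def frobInner {m n : Type*} [Fintype m] [Fintype n] (A B : Matrix m n ℝ) : ℝ :=
  ∑ i, ∑ j, A i j * B i j

def specNorm {m n : Type*} [Fintype m] [Fintype n] (A : Matrix m n ℝ) : ℝ :=
  sSup {c | ∃ x : n → ℝ, eNorm x ≤ 1 ∧ c = eNorm (A.mulVec x)}

def nucNorm {m n : Type*} [Fintype m] [Fintype n] [DecidableEq n] (A : Matrix m n ℝ) : ℝ :=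
  ∑ i, Real.sqrt ((Matrix.isHermitian_conjTranspose_mul_self A).eigenvalues i)

def hankel {n : ℕ} (v : Fin (2*n-1) → ℝ) : Matrix (Fin n) (Fin n) ℝ :=
  Matrix.of fun j k => v ⟨(j:ℕ) + k, by omega⟩

def Kw (n : ℕ) (j : Fin (2*n-1)) : ℝ :=
  if (j:ℕ) + 1 ≤ n then Real.sqrt ((j:ℕ) + 1) else Real.sqrt (2*n - ((j:ℕ)+1))

def wHankel {n p : ℕ} (β : Fin (2*n-1) × Fin p → ℝ) : Matrix (Fin n) (Fin n × Fin p) ℝ :=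
  Matrix.of fun j kl => β (⟨(j:ℕ) + kl.1, by omega⟩, kl.2) / Kw n ⟨(j:ℕ) + kl.1, by omega⟩

def blockHankel {n p : ℕ} (h : Fin (2*n-1) × Fin p → ℝ) : Matrix (Fin n) (Fin n × Fin p) ℝ :=
  Matrix.of fun j kl => h (⟨(j:ℕ) + kl.1, by omega⟩, kl.2)

def stdGaussian (ι : Type*) [Fintype ι] : Measure (ι → ℝ) :=
  Measure.pi fun _ => gaussianReal 0 1

def gaussWidth {ι : Type*} [Fintype ι] (S : Set (ι → ℝ)) : ℝ :=
  ∫ g, sSup ((fun γ => eInner γ g) '' S) ∂ stdGaussian ι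

/-!
Split `Δ = M + C` with `M = P_V(Δ)` and `C = P_W(Δ) = (1 - V₁V₁ᵀ) Δ (1 - V₂V₂ᵀ)`; the two parts
are Frobenius-orthogonal. `M` has rank at most `2R` and `‖M‖ ≤ 2‖Δ‖`, so `‖M‖_F² ≤ 8R‖Δ‖²` and
`‖M‖_* ≤ 4R‖Δ‖`. `C` is a compression of `Δ` by orthogonal projections, so `‖C‖ ≤ ‖Δ‖` and
`‖C‖_F² ≤ ‖C‖ ‖C‖_* ≤ 3‖Δ‖ ‖M‖_* ≤ 12R‖Δ‖²`. Hence `‖Δ‖_F² ≤ 20R‖Δ‖²`. The three inequalities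
between norms are read off the singular values, the square roots of the eigenvalues of `AᵀA`.
-/

open Finset

lemma eNorm_eq_norm {ι : Type*} [Fintype ι] (x : ι → ℝ) : eNorm x = ‖WithLp.toLp 2 x‖ := by
  simp [eNorm, EuclideanSpace.norm_eq]

lemma eNorm_nonneg {ι : Type*} [Fintype ι] (x : ι → ℝ) : 0 ≤ eNorm x := Real.sqrt_nonneg _

lemma eNorm_sq {ι : Type*} [Fintype ι] (x : ι → ℝ) : eNorm x ^ 2 = x ⬝ᵥ x := by
  rw [eNorm, Real.sq_sqrt (by positivity)]
  simp [dotProduct, sq]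

lemma eNorm_add_le {ι : Type*} [Fintype ι] (x y : ι → ℝ) : eNorm (x + y) ≤ eNorm x + eNorm y := by
  simpa only [eNorm_eq_norm, WithLp.toLp_add] using norm_add_le (WithLp.toLp 2 x) (WithLp.toLp 2 y)

section specNorm

variable {a b : Type*} [Fintype a] [Fintype b]

lemma specNorm_eq_opNorm [DecidableEq b] (A : Matrix a b ℝ) :
    specNorm A = ‖LinearMap.toContinuousLinearMap (Matrix.toLpLin 2 2 A)‖ := by
  rw [← ContinuousLinearMap.sSup_unitClosedBall_eq_norm, specNorm]
  congr 1
  ext c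
  constructor
  · rintro ⟨x, hx, rfl⟩
    refine ⟨WithLp.toLp 2 x, by simpa [eNorm_eq_norm] using hx, ?_⟩
    simp [eNorm_eq_norm, Matrix.toLpLin_toLp]
  · rintro ⟨x, hx, rfl⟩
    refine ⟨x.ofLp, by simpa [eNorm_eq_norm] using hx, ?_⟩
    simp [eNorm_eq_norm, Matrix.toLpLin_apply]

lemma specNorm_nonneg (A : Matrix a b ℝ) : 0 ≤ specNorm A := by
  classical
  exact specNorm_eq_opNorm A ▸ norm_nonneg _

lemma eNorm_mulVec_le (A : Matrix a b ℝ) (x : b → ℝ) :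
    eNorm (A *ᵥ x) ≤ specNorm A * eNorm x := by
  classical
  simpa [specNorm_eq_opNorm, eNorm_eq_norm, Matrix.toLpLin_toLp] using
    (LinearMap.toContinuousLinearMap (Matrix.toLpLin 2 2 A)).le_opNorm (WithLp.toLp 2 x)

lemma specNorm_le_of_forall {A : Matrix a b ℝ} {K : ℝ} (hK : 0 ≤ K)
    (h : ∀ x, eNorm (A *ᵥ x) ≤ K * eNorm x) : specNorm A ≤ K := by
  classical
  rw [specNorm_eq_opNorm]
  refine ContinuousLinearMap.opNorm_le_bound _ hK fun x => ?_
  simpa [eNorm_eq_norm, Matrix.toLpLin_apply] using h x.ofLp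

lemma specNorm_mul_le {c : Type*} [Fintype c] (A : Matrix a b ℝ) (B : Matrix b c ℝ) :
    specNorm (A * B) ≤ specNorm A * specNorm B := by
  refine specNorm_le_of_forall (mul_nonneg (specNorm_nonneg A) (specNorm_nonneg B)) fun x => ?_
  rw [← Matrix.mulVec_mulVec, mul_assoc]
  exact (eNorm_mulVec_le A _).trans
    (mul_le_mul_of_nonneg_left (eNorm_mulVec_le B x) (specNorm_nonneg A))

lemma specNorm_add_le (A B : Matrix a b ℝ) : specNorm (A + B) ≤ specNorm A + specNorm B := by
  refine specNorm_le_of_forall (add_nonneg (specNorm_nonneg A) (specNorm_nonneg B)) fun x => ?_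
  rw [Matrix.add_mulVec, add_mul]
  exact (eNorm_add_le _ _).trans (add_le_add (eNorm_mulVec_le A x) (eNorm_mulVec_le B x))

end specNorm

lemma specNorm_mul_mul_le_of_le_one {a b c d : Type*} [Fintype a] [Fintype b] [Fintype c]
    [Fintype d] {Q₁ : Matrix a b ℝ} {Q₂ : Matrix c d ℝ} (hQ₁ : specNorm Q₁ ≤ 1)
    (hQ₂ : specNorm Q₂ ≤ 1) (Δ : Matrix b c ℝ) : specNorm (Q₁ * Δ * Q₂) ≤ specNorm Δ :=
  calc specNorm (Q₁ * Δ * Q₂) ≤ specNorm Q₁ * specNorm Δ * specNorm Q₂ :=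
        (specNorm_mul_le _ _).trans
          (mul_le_mul_of_nonneg_right (specNorm_mul_le _ _) (specNorm_nonneg _))
    _ ≤ specNorm Q₁ * specNorm Δ :=
        mul_le_of_le_one_right (mul_nonneg (specNorm_nonneg _) (specNorm_nonneg _)) hQ₂
    _ ≤ specNorm Δ := mul_le_of_le_one_left (specNorm_nonneg _) hQ₁

section OrthogonalProjection

variable {a b : Type*} [Fintype a] [Fintype b] {Q : Matrix a a ℝ}

lemma eNorm_mulVec_le_of_isSymm_of_isIdempotentElem (hQ : Q.IsSymm) (hQ' : IsIdempotentElem Q)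
    (x : a → ℝ) : eNorm (Q *ᵥ x) ≤ eNorm x := by
  have hQx : (Q *ᵥ x) ⬝ᵥ (Q *ᵥ x) = x ⬝ᵥ (Q *ᵥ x) := by
    rw [Matrix.dotProduct_mulVec, ← Matrix.mulVec_transpose, hQ.eq, Matrix.mulVec_mulVec, hQ'.eq]
    exact dotProduct_comm _ _
  have hpyth : 0 ≤ x ⬝ᵥ x - (Q *ᵥ x) ⬝ᵥ (Q *ᵥ x) := by
    have h := eNorm_sq (x - Q *ᵥ x) ▸ sq_nonneg (eNorm (x - Q *ᵥ x))
    simp only [sub_dotProduct, dotProduct_sub, dotProduct_comm (Q *ᵥ x) x, hQx] at h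
    linarith
  refine (pow_le_pow_iff_left₀ (eNorm_nonneg _) (eNorm_nonneg _) two_ne_zero).1 ?_
  rw [eNorm_sq, eNorm_sq]
  linarith

lemma specNorm_le_one_of_isSymm_of_isIdempotentElem (hQ : Q.IsSymm)
    (hQ' : IsIdempotentElem Q) : specNorm Q ≤ 1 :=
  specNorm_le_of_forall zero_le_one fun x => by
    simpa using eNorm_mulVec_le_of_isSymm_of_isIdempotentElem hQ hQ' x

end OrthogonalProjection

lemma Finset.sum_le_card_filter_ne_zero_mul {ι : Type*} [Fintype ι] {f : ι → ℝ} {K : ℝ}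
    (h : ∀ i, f i ≤ K) : ∑ i, f i ≤ #{i | f i ≠ 0} * K := by
  rw [← Finset.sum_filter_ne_zero, ← nsmul_eq_mul]
  exact Finset.sum_le_card_nsmul _ _ _ fun i _ => h i

section SingularValues

variable {a b : Type*} [Fintype a] [Fintype b] [DecidableEq b] (A : Matrix a b ℝ)

/-- The singular values of `A`, padded with zeros to the number of columns. -/
def singularValue (i : b) : ℝ :=
  √((Matrix.isHermitian_conjTranspose_mul_self A).eigenvalues i)

lemma nucNorm_eq_sum_singularValue : nucNorm A = ∑ i, singularValue A i := rfl

lemma singularValue_nonneg (i : b) : 0 ≤ singularValue A i := Real.sqrt_nonneg _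

lemma nucNorm_nonneg : 0 ≤ nucNorm A :=
  Finset.sum_nonneg fun i _ => singularValue_nonneg A i

lemma singularValue_sq (i : b) :
    singularValue A i ^ 2 = (Matrix.isHermitian_conjTranspose_mul_self A).eigenvalues i :=
  Real.sq_sqrt (Matrix.eigenvalues_conjTranspose_mul_self_nonneg A i)

lemma sum_singularValue_sq : ∑ i, singularValue A i ^ 2 = frobNorm A ^ 2 := by
  have htrace := (Matrix.isHermitian_conjTranspose_mul_self A).trace_eq_sum_eigenvalues
  simp only [RCLike.ofReal_real_eq_id, id] at htrace
  rw [frobNorm, Real.sq_sqrt (by positivity)]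
  simp_rw [singularValue_sq, ← htrace, Matrix.trace, Matrix.diag, Matrix.mul_apply,
    Matrix.conjTranspose_apply, star_trivial, sq]
  exact Finset.sum_comm

lemma card_singularValue_ne_zero : #{i | singularValue A i ≠ 0} = A.rank := by
  rw [← Matrix.rank_conjTranspose_mul_self,
    (Matrix.isHermitian_conjTranspose_mul_self A).rank_eq_card_non_zero_eigs, Fintype.card_subtype]
  simp only [singularValue, ne_eq,
    Real.sqrt_eq_zero (Matrix.eigenvalues_conjTranspose_mul_self_nonneg A _)]

lemma singularValue_le_specNorm (i : b) : singularValue A i ≤ specNorm A := by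
  set hA := Matrix.isHermitian_conjTranspose_mul_self A
  set v : b → ℝ := (hA.eigenvectorBasis i).ofLp
  have hv : eNorm v = 1 := by
    simp [eNorm_eq_norm, v]
  have hsq : singularValue A i ^ 2 = eNorm (A *ᵥ v) ^ 2 := by
    calc singularValue A i ^ 2 = v ⬝ᵥ ((Aᴴ * A) *ᵥ v) := by
          rw [singularValue_sq, hA.mulVec_eigenvectorBasis, dotProduct_smul, ← eNorm_sq, hv]
          simp
      _ = eNorm (A *ᵥ v) ^ 2 := by
          rw [eNorm_sq, ← Matrix.mulVec_mulVec, Matrix.dotProduct_mulVec,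
            Matrix.conjTranspose_eq_transpose_of_trivial, Matrix.vecMul_transpose]
  refine (pow_le_pow_iff_left₀ (singularValue_nonneg A i) (specNorm_nonneg A) two_ne_zero).1 ?_
  rw [hsq]
  simpa [hv] using pow_le_pow_left₀ (eNorm_nonneg _) (eNorm_mulVec_le A v) 2

lemma frobNorm_sq_le_specNorm_mul_nucNorm : frobNorm A ^ 2 ≤ specNorm A * nucNorm A := by
  rw [← sum_singularValue_sq, nucNorm_eq_sum_singularValue, Finset.mul_sum]
  refine Finset.sum_le_sum fun i _ => ?_
  rw [sq]
  exact mul_le_mul_of_nonneg_right (singularValue_le_specNorm A i) (singularValue_nonneg A i)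

lemma frobNorm_sq_le_rank_mul_specNorm_sq : frobNorm A ^ 2 ≤ A.rank * specNorm A ^ 2 := by
  have h := Finset.sum_le_card_filter_ne_zero_mul fun i =>
    pow_le_pow_left₀ (singularValue_nonneg A i) (singularValue_le_specNorm A i) 2
  simpa only [ne_eq, pow_eq_zero_iff two_ne_zero, sum_singularValue_sq,
    card_singularValue_ne_zero] using h

lemma nucNorm_le_rank_mul_specNorm : nucNorm A ≤ A.rank * specNorm A := by
  rw [nucNorm_eq_sum_singularValue, ← card_singularValue_ne_zero]
  exact Finset.sum_le_card_filter_ne_zero_mul (singularValue_le_specNorm A)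

end SingularValues

section Frobenius

variable {a b : Type*} [Fintype a] [Fintype b]

lemma frobNorm_nonneg (A : Matrix a b ℝ) : 0 ≤ frobNorm A := Real.sqrt_nonneg _

lemma frobNorm_sq (A : Matrix a b ℝ) : frobNorm A ^ 2 = ∑ i, ∑ j, A i j ^ 2 :=
  Real.sq_sqrt (by positivity)

lemma frobNorm_add_sq_of_frobInner_eq_zero {A B : Matrix a b ℝ} (h : frobInner A B = 0) :
    frobNorm (A + B) ^ 2 = frobNorm A ^ 2 + frobNorm B ^ 2 := by
  have hsum : ∑ i, ∑ j, (A + B) i j ^ 2 =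
      ∑ i, ∑ j, A i j ^ 2 + 2 * frobInner A B + ∑ i, ∑ j, B i j ^ 2 := by
    simp only [frobInner, Matrix.add_apply, add_sq, Finset.sum_add_distrib, Finset.mul_sum,
      mul_assoc]
  rw [frobNorm_sq, frobNorm_sq, frobNorm_sq, hsum, h, mul_zero, add_zero]

lemma frobInner_eq_trace (A B : Matrix a b ℝ) : frobInner A B = (Aᵀ * B).trace := by
  simp only [frobInner, Matrix.trace, Matrix.diag, Matrix.mul_apply, Matrix.transpose_apply]
  exact Finset.sum_comm

lemma frobInner_mul_mul_right {Q₁ : Matrix a a ℝ} {Q₂ : Matrix b b ℝ} (hQ₁ : Q₁.IsSymm)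
    (hQ₂ : Q₂.IsSymm) (X Y : Matrix a b ℝ) :
    frobInner X (Q₁ * Y * Q₂) = frobInner (Q₁ * X * Q₂) Y := by
  rw [frobInner_eq_trace, frobInner_eq_trace, Matrix.transpose_mul, Matrix.transpose_mul,
    hQ₁.eq, hQ₂.eq, ← Matrix.mul_assoc, ← Matrix.mul_assoc, Matrix.trace_mul_comm]
  simp only [Matrix.mul_assoc]

lemma frobInner_sub_mul_mul_self_eq_zero {Q₁ : Matrix a a ℝ} {Q₂ : Matrix b b ℝ}
    (hQ₁ : Q₁.IsSymm) (hQ₁' : IsIdempotentElem Q₁) (hQ₂ : Q₂.IsSymm)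
    (hQ₂' : IsIdempotentElem Q₂) (Δ : Matrix a b ℝ) :
    frobInner (Δ - Q₁ * Δ * Q₂) (Q₁ * Δ * Q₂) = 0 := by
  have hzero : Q₁ * (Δ - Q₁ * Δ * Q₂) * Q₂ = 0 := by
    rw [Matrix.mul_sub, Matrix.sub_mul,
      show Q₁ * (Q₁ * Δ * Q₂) * Q₂ = (Q₁ * Q₁) * Δ * (Q₂ * Q₂) by simp only [Matrix.mul_assoc],
      hQ₁'.eq, hQ₂'.eq, sub_self]
  rw [frobInner_mul_mul_right hQ₁ hQ₂, hzero]
  simp [frobInner]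

end Frobenius

lemma Matrix.rank_add_le {a b K : Type*} [Fintype a] [Fintype b] [Field K] (A B : Matrix a b K) :
    (A + B).rank ≤ A.rank + B.rank := by
  have h : LinearMap.range (A + B).mulVecLin ≤
      LinearMap.range A.mulVecLin ⊔ LinearMap.range B.mulVecLin := by
    rintro y ⟨x, rfl⟩
    rw [Matrix.mulVecLin_add, LinearMap.add_apply]
    exact Submodule.add_mem_sup (LinearMap.mem_range_self _ x) (LinearMap.mem_range_self _ x)
  exact (Submodule.finrank_mono h).trans (Submodule.finrank_add_le_finrank_add_finrank _ _)

section TangentProjection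

variable {a b r : Type*} [Fintype a] [Fintype b] [Fintype r]

def projV (V₁ : Matrix a r ℝ) (V₂ : Matrix b r ℝ) (M : Matrix a b ℝ) : Matrix a b ℝ :=
  V₁ * V₁ᵀ * M + M * (V₂ * V₂ᵀ) - V₁ * V₁ᵀ * M * (V₂ * V₂ᵀ)

lemma sub_projV [DecidableEq a] [DecidableEq b] (V₁ : Matrix a r ℝ) (V₂ : Matrix b r ℝ)
    (M : Matrix a b ℝ) : M - projV V₁ V₂ M = (1 - V₁ * V₁ᵀ) * M * (1 - V₂ * V₂ᵀ) := by
  simp only [projV, Matrix.sub_mul, Matrix.mul_sub, Matrix.one_mul, Matrix.mul_one,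
    Matrix.mul_assoc]
  abel

lemma rank_projV_le (V₁ : Matrix a r ℝ) (V₂ : Matrix b r ℝ) (M : Matrix a b ℝ) :
    (projV V₁ V₂ M).rank ≤ 2 * Fintype.card r := by
  have hsplit : projV V₁ V₂ M = V₁ * (V₁ᵀ * M) + (M - V₁ * V₁ᵀ * M) * V₂ * V₂ᵀ := by
    simp only [projV, Matrix.sub_mul, Matrix.mul_assoc]
    abel
  rw [hsplit, two_mul]
  exact (Matrix.rank_add_le _ _).trans (add_le_add
    ((Matrix.rank_mul_le_left _ _).trans V₁.rank_le_card_width)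
    ((Matrix.rank_mul_le_right _ _).trans V₂ᵀ.rank_le_card_height))

omit [Fintype a] in
lemma isSymm_mul_transpose (V : Matrix a r ℝ) : (V * Vᵀ).IsSymm :=
  Matrix.transpose_mul V Vᵀ

lemma isIdempotentElem_mul_transpose [DecidableEq r] {V : Matrix a r ℝ} (hV : Vᵀ * V = 1) :
    IsIdempotentElem (V * Vᵀ) := by
  rw [IsIdempotentElem, Matrix.mul_assoc, ← Matrix.mul_assoc Vᵀ, hV, Matrix.one_mul]

lemma specNorm_mul_transpose_le_one [DecidableEq r] {V : Matrix a r ℝ} (hV : Vᵀ * V = 1) :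
    specNorm (V * Vᵀ) ≤ 1 :=
  specNorm_le_one_of_isSymm_of_isIdempotentElem (isSymm_mul_transpose V)
    (isIdempotentElem_mul_transpose hV)

lemma specNorm_one_sub_mul_transpose_le_one [DecidableEq a] [DecidableEq r] {V : Matrix a r ℝ}
    (hV : Vᵀ * V = 1) : specNorm (1 - V * Vᵀ) ≤ 1 :=
  specNorm_le_one_of_isSymm_of_isIdempotentElem (Matrix.isSymm_one.sub (isSymm_mul_transpose V))
    (isIdempotentElem_mul_transpose hV).one_sub

variable [DecidableEq a] [DecidableEq b] [DecidableEq r] {V₁ : Matrix a r ℝ} {V₂ : Matrix b r ℝ}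
  (hV₁ : V₁ᵀ * V₁ = 1) (hV₂ : V₂ᵀ * V₂ = 1)
include hV₁ hV₂

lemma frobInner_projV_sub_projV (M : Matrix a b ℝ) :
    frobInner (projV V₁ V₂ M) (M - projV V₁ V₂ M) = 0 := by
  have h := frobInner_sub_mul_mul_self_eq_zero
    (Matrix.isSymm_one.sub (isSymm_mul_transpose V₁))
    (isIdempotentElem_mul_transpose hV₁).one_sub
    (Matrix.isSymm_one.sub (isSymm_mul_transpose V₂))
    (isIdempotentElem_mul_transpose hV₂).one_sub M
  rwa [← sub_projV, sub_sub_cancel] at h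

lemma specNorm_sub_projV_le (M : Matrix a b ℝ) : specNorm (M - projV V₁ V₂ M) ≤ specNorm M := by
  rw [sub_projV]
  exact specNorm_mul_mul_le_of_le_one (specNorm_one_sub_mul_transpose_le_one hV₁)
    (specNorm_one_sub_mul_transpose_le_one hV₂) M

omit [DecidableEq b] in
lemma specNorm_projV_le (M : Matrix a b ℝ) : specNorm (projV V₁ V₂ M) ≤ 2 * specNorm M := by
  have hsplit : projV V₁ V₂ M = V₁ * V₁ᵀ * M + (1 - V₁ * V₁ᵀ) * M * (V₂ * V₂ᵀ) := by
    simp only [projV, Matrix.sub_mul, Matrix.one_mul]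
    abel
  have hfirst : specNorm (V₁ * V₁ᵀ * M) ≤ specNorm M :=
    (specNorm_mul_le _ _).trans
      (mul_le_of_le_one_left (specNorm_nonneg M) (specNorm_mul_transpose_le_one hV₁))
  rw [hsplit, two_mul]
  exact (specNorm_add_le _ _).trans (add_le_add hfirst (specNorm_mul_mul_le_of_le_one
    (specNorm_one_sub_mul_transpose_le_one hV₁) (specNorm_mul_transpose_le_one hV₂) M))

lemma frobNorm_projV_sq_le (M : Matrix a b ℝ) :
    frobNorm (projV V₁ V₂ M) ^ 2 ≤ 8 * Fintype.card r * specNorm M ^ 2 := by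
  have hrank : ((projV V₁ V₂ M).rank : ℝ) ≤ 2 * Fintype.card r := by
    exact_mod_cast rank_projV_le V₁ V₂ M
  calc frobNorm (projV V₁ V₂ M) ^ 2
      ≤ (projV V₁ V₂ M).rank * specNorm (projV V₁ V₂ M) ^ 2 :=
        frobNorm_sq_le_rank_mul_specNorm_sq _
    _ ≤ 2 * Fintype.card r * (2 * specNorm M) ^ 2 := by
        gcongr
        exacts [specNorm_nonneg _, specNorm_projV_le hV₁ hV₂ M]
    _ = 8 * Fintype.card r * specNorm M ^ 2 := by ring

lemma nucNorm_projV_le (M : Matrix a b ℝ) :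
    nucNorm (projV V₁ V₂ M) ≤ 4 * Fintype.card r * specNorm M := by
  have hrank : ((projV V₁ V₂ M).rank : ℝ) ≤ 2 * Fintype.card r := by
    exact_mod_cast rank_projV_le V₁ V₂ M
  calc nucNorm (projV V₁ V₂ M) ≤ (projV V₁ V₂ M).rank * specNorm (projV V₁ V₂ M) :=
        nucNorm_le_rank_mul_specNorm _
    _ ≤ 2 * Fintype.card r * (2 * specNorm M) := by
        gcongr
        exacts [specNorm_nonneg _, specNorm_projV_le hV₁ hV₂ M]
    _ = 4 * Fintype.card r * specNorm M := by ring

end TangentProjection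

/-- If `‖P_W(Δ)‖_* ≤ 3‖P_V(Δ)‖_*` then `‖Δ‖_F ≤ 5√R · ‖Δ‖`. -/
theorem stmt11 (n m R : ℕ) (Δ : Matrix (Fin n) (Fin m) ℝ)
    (V₁ : Matrix (Fin n) (Fin R) ℝ) (V₂ : Matrix (Fin m) (Fin R) ℝ)
    (hV₁ : V₁ᵀ * V₁ = 1) (hV₂ : V₂ᵀ * V₂ = 1)
    (hcone : nucNorm (Δ - (V₁ * V₁ᵀ * Δ + Δ * (V₂ * V₂ᵀ) - V₁ * V₁ᵀ * Δ * (V₂ * V₂ᵀ))) ≤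
      3 * nucNorm (V₁ * V₁ᵀ * Δ + Δ * (V₂ * V₂ᵀ) - V₁ * V₁ᵀ * Δ * (V₂ * V₂ᵀ))) :
    frobNorm Δ ≤ 5 * Real.sqrt R * specNorm Δ := by
  change nucNorm (Δ - projV V₁ V₂ Δ) ≤ 3 * nucNorm (projV V₁ V₂ Δ) at hcone
  set M := projV V₁ V₂ Δ
  set s := specNorm Δ
  have hs : 0 ≤ s := specNorm_nonneg Δ
  have hfrobM : frobNorm M ^ 2 ≤ 8 * R * s ^ 2 := by
    simpa using frobNorm_projV_sq_le hV₁ hV₂ Δ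
  have hnucM : nucNorm M ≤ 4 * R * s := by simpa using nucNorm_projV_le hV₁ hV₂ Δ
  have hfrobC : frobNorm (Δ - M) ^ 2 ≤ 12 * R * s ^ 2 :=
    calc frobNorm (Δ - M) ^ 2 ≤ specNorm (Δ - M) * nucNorm (Δ - M) :=
          frobNorm_sq_le_specNorm_mul_nucNorm _
      _ ≤ s * (3 * (4 * R * s)) := by
          gcongr
          · exact nucNorm_nonneg _
          · exact specNorm_sub_projV_le hV₁ hV₂ Δ
          · linarith
      _ = 12 * R * s ^ 2 := by ring
  have hpyth : frobNorm Δ ^ 2 = frobNorm M ^ 2 + frobNorm (Δ - M) ^ 2 := by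
    simpa using frobNorm_add_sq_of_frobInner_eq_zero (frobInner_projV_sub_projV hV₁ hV₂ Δ)
  have hsqrt : (5 * Real.sqrt R * s) ^ 2 = 25 * R * s ^ 2 := by
    rw [mul_pow, mul_pow, Real.sq_sqrt (Nat.cast_nonneg R)]
    ring
  refine (pow_le_pow_iff_left₀ (frobNorm_nonneg Δ) (by positivity) two_ne_zero).1 ?_
  rw [hsqrt, hpyth]
  nlinarith
end
end

section
/- For every n ≥ 1 and every v ∈ ℂ^{2n−1}, the spectral norm of the n×n Hankel matrix H(v) is bounded by the largest modulus of the discrete Fourier transform of v: ‖H(v)‖ ≤ max_{0 ≤ k ≤ 2n−2} | Σ_{j=0}^{2n−2} v_{j+1} e^{−2πi·jk/(2n−1)} |. -/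
open MeasureTheory ProbabilityTheory Matrix

noncomputable section

def eNormC {ι : Type*} [Fintype ι] (x : ι → ℂ) : ℝ := Real.sqrt (∑ i, ‖x i‖ ^ 2)

def specNormC {m n : Type*} [Fintype m] [Fintype n] (A : Matrix m n ℂ) : ℝ :=
  sSup {c | ∃ x : n → ℂ, eNormC x ≤ 1 ∧ c = eNormC (A.mulVec x)}

def hankelC {n : ℕ} (v : Fin (2*n-1) → ℂ) : Matrix (Fin n) (Fin n) ℂ :=
  Matrix.of fun j k => v ⟨(j:ℕ) + k, by omega⟩

/-! The `n × n` Hankel matrix `H(v)` is the principal submatrix, on the indices `0, …, n - 1`,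
of the Hankel-circulant matrix `C = (v (j + l))` indexed by `ZMod (2n - 1)`, and passing to a
principal submatrix does not increase the operator norm. The discrete Fourier transform turns
`C` into a multiplication operator composed with the reflection `k ↦ -k`:
`𝓕 (C y) k = 𝓕 v k * 𝓕 y (-k)`. By Parseval, `‖C y‖ ≤ (max_k ‖𝓕 v k‖) * ‖y‖`. -/

section EuclideanNorm

variable {ι κ : Type*} [Fintype ι] [Fintype κ]

lemma eNormC_le_mul_eNormC {x : ι → ℂ} {y : κ → ℂ} {M : ℝ} (hM : 0 ≤ M)
    (h : ∑ i, ‖x i‖ ^ 2 ≤ M ^ 2 * ∑ j, ‖y j‖ ^ 2) : eNormC x ≤ M * eNormC y := by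
  rw [eNormC, eNormC, ← Real.sqrt_sq hM, ← Real.sqrt_mul (sq_nonneg M)]
  exact Real.sqrt_le_sqrt h

lemma specNormC_le {A : Matrix κ ι ℂ} {M : ℝ} (hM : 0 ≤ M)
    (h : ∀ x, eNormC (A *ᵥ x) ≤ M * eNormC x) : specNormC A ≤ M := by
  refine Real.sSup_le ?_ hM
  rintro _ ⟨x, hx, rfl⟩
  calc eNormC (A *ᵥ x) ≤ M * eNormC x := h x
    _ ≤ M * 1 := by gcongr
    _ = M := mul_one M

lemma eNormC_comp_le {e : ι → κ} (he : Function.Injective e) (y : κ → ℂ) :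
    eNormC (y ∘ e) ≤ eNormC y := by
  refine Real.sqrt_le_sqrt <| (Finset.sum_map Finset.univ ⟨e, he⟩ fun j ↦ ‖y j‖ ^ 2).symm.le.trans
    (Finset.sum_le_univ_sum_of_nonneg fun _ ↦ by positivity)

lemma eNormC_extend_zero {e : ι → κ} (he : Function.Injective e) (x : ι → ℂ) :
    eNormC (Function.extend e x 0) = eNormC x := by
  refine congrArg Real.sqrt (Fintype.sum_of_injective e he _ _ (fun j hj ↦ ?_) fun i ↦ ?_).symm
  · simp [Function.extend_apply' _ _ _ hj]
  · rw [he.extend_apply]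

lemma submatrix_mulVec_eq_comp {A : Matrix κ κ ℂ} {e : ι → κ} (he : Function.Injective e)
    (x : ι → ℂ) : A.submatrix e e *ᵥ x = (A *ᵥ Function.extend e x 0) ∘ e := by
  ext i
  simp only [Matrix.mulVec, dotProduct, Matrix.submatrix_apply, Function.comp_apply]
  refine Fintype.sum_of_injective e he _ _ (fun j hj ↦ ?_) fun i' ↦ ?_
  · simp [Function.extend_apply' _ _ _ hj]
  · rw [he.extend_apply]

lemma eNormC_submatrix_mulVec_le {A : Matrix κ κ ℂ} {e : ι → κ} (he : Function.Injective e)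
    {M : ℝ} (hA : ∀ y, eNormC (A *ᵥ y) ≤ M * eNormC y) (x : ι → ℂ) :
    eNormC (A.submatrix e e *ᵥ x) ≤ M * eNormC x := by
  rw [submatrix_mulVec_eq_comp he, ← eNormC_extend_zero he x]
  exact (eNormC_comp_le he _).trans (hA _)

end EuclideanNorm

namespace ZMod

open ComplexConjugate

variable {N : ℕ} [NeZero N]

lemma conj_dft (Φ : ZMod N → ℂ) (k : ZMod N) :
    conj (𝓕 Φ k) = 𝓕 (fun j ↦ conj (Φ (-j))) k := by
  simp only [dft_apply, map_sum, smul_eq_mul, map_mul, ← AddChar.map_neg_eq_conj]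
  exact Fintype.sum_equiv (Equiv.neg _) _ _ fun j ↦ by simp

lemma sum_dft_mul (Φ Ψ : ZMod N → ℂ) : ∑ k, 𝓕 Φ k * Ψ k = ∑ j, Φ j * 𝓕 Ψ j := by
  simp only [dft_apply, smul_eq_mul, Finset.sum_mul, Finset.mul_sum]
  rw [Finset.sum_comm]
  refine Fintype.sum_congr _ _ fun j ↦ Fintype.sum_congr _ _ fun k ↦ ?_
  rw [mul_comm k j]; ring

lemma sum_norm_sq_dft (Φ : ZMod N → ℂ) : ∑ k, ‖𝓕 Φ k‖ ^ 2 = N * ∑ j, ‖Φ j‖ ^ 2 := by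
  apply Complex.ofReal_injective
  push_cast
  simp only [← Complex.mul_conj', conj_dft, sum_dft_mul, dft_dft, neg_neg, Finset.mul_sum]
  refine Fintype.sum_congr _ _ fun j ↦ ?_
  simp only [smul_eq_mul]; ring

def hankelCirculant (v : ZMod N → ℂ) : Matrix (ZMod N) (ZMod N) ℂ :=
  Matrix.of fun j l ↦ v (j + l)

lemma dft_hankelCirculant_mulVec (v y : ZMod N → ℂ) (k : ZMod N) :
    𝓕 (hankelCirculant v *ᵥ y) k = 𝓕 v k * 𝓕 y (-k) := by
  have shift (l : ZMod N) :
      ∑ j, stdAddChar (-(j * k)) * v (j + l) = stdAddChar (l * k) * 𝓕 v k := by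
    rw [dft_apply, Finset.mul_sum]
    refine Fintype.sum_equiv (Equiv.addRight l) _ _ fun j ↦ ?_
    rw [Equiv.coe_addRight, smul_eq_mul, ← mul_assoc, ← AddChar.map_add_eq_mul]
    ring_nf
  calc 𝓕 (hankelCirculant v *ᵥ y) k
      = ∑ l, (∑ j, stdAddChar (-(j * k)) * v (j + l)) * y l := by
        simp only [dft_apply, hankelCirculant, Matrix.mulVec, dotProduct, Matrix.of_apply,
          smul_eq_mul, Finset.mul_sum, Finset.sum_mul, mul_assoc]
        exact Finset.sum_comm
    _ = 𝓕 v k * 𝓕 y (-k) := by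
        simp only [shift, dft_apply y, smul_eq_mul, Finset.mul_sum, mul_neg, neg_neg]
        exact Fintype.sum_congr _ _ fun l ↦ by ring

lemma eNormC_hankelCirculant_mulVec_le {v : ZMod N → ℂ} {M : ℝ}
    (hM : ∀ k, ‖𝓕 v k‖ ≤ M) (y : ZMod N → ℂ) :
    eNormC (hankelCirculant v *ᵥ y) ≤ M * eNormC y := by
  refine eNormC_le_mul_eNormC ((norm_nonneg _).trans (hM 0)) ?_
  have hN : (0 : ℝ) < N := by exact_mod_cast NeZero.pos N
  refine le_of_mul_le_mul_left ?_ hN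
  calc N * ∑ j, ‖(hankelCirculant v *ᵥ y) j‖ ^ 2
      = ∑ k, ‖𝓕 v k‖ ^ 2 * ‖𝓕 y (-k)‖ ^ 2 := by
        simp only [← sum_norm_sq_dft, dft_hankelCirculant_mulVec, norm_mul, mul_pow]
    _ ≤ ∑ k, M ^ 2 * ‖𝓕 y (-k)‖ ^ 2 := by gcongr with k; exact hM k
    _ = M ^ 2 * ∑ k, ‖𝓕 y k‖ ^ 2 := by
        rw [← Finset.mul_sum]
        congr 1
        exact Fintype.sum_equiv (Equiv.neg _) _ _ fun _ ↦ rfl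
    _ = N * (M ^ 2 * ∑ l, ‖y l‖ ^ 2) := by rw [sum_norm_sq_dft]; ring

omit [NeZero N] in
lemma natCast_finVal_injective {m : ℕ} (h : m ≤ N) :
    Function.Injective (fun i : Fin m ↦ ((i : ℕ) : ZMod N)) := by
  intro i j hij
  have := congrArg ZMod.val hij
  rwa [val_cast_of_lt (i.isLt.trans_le h), val_cast_of_lt (j.isLt.trans_le h), ← Fin.ext_iff]
    at this

lemma dft_apply_natCast_fin (Φ : Fin N → ℂ) (k : Fin N) :
    𝓕 (fun a : ZMod N ↦ Φ ⟨a.val, a.val_lt⟩) (k : ℕ) =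
      ∑ j : Fin N, Φ j * Complex.exp (-(2 * Real.pi * Complex.I * (j : ℕ) * (k : ℕ)) / N) := by
  have hbij : Function.Bijective (fun i : Fin N ↦ ((i : ℕ) : ZMod N)) :=
    (Fintype.bijective_iff_injective_and_card _).mpr ⟨natCast_finVal_injective le_rfl, by simp⟩
  rw [dft_apply]
  refine (Fintype.sum_bijective _ hbij _ _ fun j ↦ ?_).symm
  have hchar : -(((j : ℕ) : ZMod N) * ((k : ℕ) : ZMod N)) =
      (Int.cast (-(((j : ℕ) : ℤ) * ((k : ℕ) : ℤ))) : ZMod N) := by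
    push_cast; ring
  rw [hchar, stdAddChar_coe, smul_eq_mul, mul_comm]
  simp only [val_cast_of_lt j.isLt]
  congr 2
  push_cast; ring

end ZMod

open scoped ZMod

lemma hankelC_eq_submatrix_hankelCirculant {n : ℕ} [NeZero (2 * n - 1)]
    (v : Fin (2 * n - 1) → ℂ) :
    hankelC v = (ZMod.hankelCirculant fun a ↦ v ⟨a.val, a.val_lt⟩).submatrix
      (fun i : Fin n ↦ ((i : ℕ) : ZMod (2 * n - 1)))
      (fun i : Fin n ↦ ((i : ℕ) : ZMod (2 * n - 1))) := by
  ext j k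
  simp only [hankelC, ZMod.hankelCirculant, Matrix.submatrix_apply, Matrix.of_apply,
    ← Nat.cast_add]
  congr
  rw [ZMod.val_cast_of_lt (by omega)]

/-- The spectral norm of the `n×n` Hankel matrix of `v ∈ ℂ^{2n-1}` is bounded by the
largest modulus of the discrete Fourier transform of `v`. -/
theorem stmt15 (n : ℕ) (hn : 1 ≤ n) (v : Fin (2*n-1) → ℂ) :
    specNormC (hankelC v) ≤
      ⨆ k : Fin (2*n-1), ‖∑ j : Fin (2*n-1),
        v j * Complex.exp (-(2 * Real.pi * Complex.I * (j:ℕ) * (k:ℕ)) / (2 * n - 1))‖ := by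
  have : NeZero (2 * n - 1) := ⟨by omega⟩
  set M := ⨆ k : Fin (2*n-1), ‖∑ j : Fin (2*n-1),
    v j * Complex.exp (-(2 * Real.pi * Complex.I * (j:ℕ) * (k:ℕ)) / (2 * n - 1))‖ with hM
  have hN : (2 * n - 1 : ℂ) = ((2 * n - 1 : ℕ) : ℂ) := by
    rw [Nat.cast_sub (by omega)]; push_cast; ring
  have hdft (k : ZMod (2 * n - 1)) : ‖𝓕 (fun a ↦ v ⟨a.val, a.val_lt⟩) k‖ ≤ M := by
    obtain ⟨k, rfl⟩ : ∃ k' : Fin (2 * n - 1), ((k' : ℕ) : ZMod (2 * n - 1)) = k :=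
      ⟨⟨k.val, k.val_lt⟩, ZMod.natCast_zmod_val k⟩
    rw [ZMod.dft_apply_natCast_fin, hM, hN]
    exact le_ciSup_of_le (Finite.bddAbove_range _) k le_rfl
  refine specNormC_le ((norm_nonneg _).trans (hdft 0)) fun x ↦ ?_
  rw [hankelC_eq_submatrix_hankelCirculant]
  exact eNormC_submatrix_mulVec_le (ZMod.natCast_finVal_injective (by omega))
    (ZMod.eNormC_hankelCirculant_mulVec_le hdft) x

end
end
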